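/- arXiv:1110.3023 — 2 statements merged into one kernel-verified Lean document; each statement's English description precedes it below -/
import Mathlib

section
/- Let V be a real vector space with an almost contact B-metric structure (φ, ξ, η, g), let F be a trilinear form on V satisfying the 𝒰-conditions and additionally the 𝒰₁-condition F(x,φy,ξ) = F(y,φx,ξ) for all x, y ∈ V, and let T be the torsion tensor of the φB-connection expressed through F. Then for all x, y, z ∈ V: T(x,y,z) = η(x)T(ξ,φ²y,φ²z) − η(y)T(ξ,φ²x,φ²z) and T(ξ,y,z) = T(ξ,z,y). (These identities express that T belongs to the class 𝒯₃₁ ⊕ 𝒯₃₃ of the invariant decomposition of torsion tensors.) -/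
/-! Everything is governed by the bilinear form `A(x, y) = F(x, φy, ξ)`. Since `F(ξ, ·, ·) = 0` and
`φξ = 0`, the torsion restricted to `ξ` is `T(ξ, y, z) = A(y, z)`; since moreover `φ³ = -φ`, the form
`A` is invariant under `φ²`. The `𝒰₁`-condition says that `A` is symmetric, which kills the `η(z)`-term
of `T` and makes `T(ξ, ·, ·)` symmetric. -/

section PhiBTorsion

variable {V : Type*} [AddCommGroup V] [Module ℝ V]
  (φ : V →ₗ[ℝ] V) (ξ : V) (η : V →ₗ[ℝ] ℝ) (F : V →ₗ[ℝ] V →ₗ[ℝ] V →ₗ[ℝ] ℝ)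

def phiBTorsion (x y z : V) : ℝ :=
  η x * F y (φ z) ξ - η y * F x (φ z) ξ + η z * (F x (φ y) ξ - F y (φ x) ξ)

variable {φ ξ η F}

lemma phi_phi_phi (hφ2 : ∀ x, φ (φ x) = -x + η x • ξ) (hηφ : ∀ x, η (φ x) = 0) (x : V) :
    φ (φ (φ x)) = -φ x := by
  rw [hφ2 (φ x), hηφ, zero_smul, add_zero]

lemma apply_phi_sq_phi_cube_xi (hφ2 : ∀ x, φ (φ x) = -x + η x • ξ) (hηφ : ∀ x, η (φ x) = 0)
    (hFξ : ∀ y z, F ξ y z = 0) (y z : V) :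
    F (φ (φ y)) (φ (φ (φ z))) ξ = F y (φ z) ξ := by
  simp only [phi_phi_phi hφ2 hηφ, hφ2 y, map_add, map_neg, map_smul, LinearMap.add_apply,
    LinearMap.neg_apply, LinearMap.smul_apply, hFξ, smul_zero, add_zero, neg_neg]

lemma phiBTorsion_xi_left (hφξ : φ ξ = 0) (hηξ : η ξ = 1) (hFξ : ∀ y z, F ξ y z = 0) (y z : V) :
    phiBTorsion φ ξ η F ξ y z = F y (φ z) ξ := by
  simp only [phiBTorsion, hηξ, hFξ, hφξ, map_zero, LinearMap.zero_apply]
  ring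

lemma phiBTorsion_xi_phi_sq (hφξ : φ ξ = 0) (hφ2 : ∀ x, φ (φ x) = -x + η x • ξ)
    (hηφ : ∀ x, η (φ x) = 0) (hηξ : η ξ = 1) (hFξ : ∀ y z, F ξ y z = 0) (y z : V) :
    phiBTorsion φ ξ η F ξ (φ (φ y)) (φ (φ z)) = F y (φ z) ξ := by
  rw [phiBTorsion_xi_left hφξ hηξ hFξ, apply_phi_sq_phi_cube_xi hφ2 hηφ hFξ]

lemma phiBTorsion_of_symm (hA : ∀ x y, F x (φ y) ξ = F y (φ x) ξ) (x y z : V) :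
    phiBTorsion φ ξ η F x y z = η x * F y (φ z) ξ - η y * F x (φ z) ξ := by
  rw [phiBTorsion, hA x y, sub_self, mul_zero, add_zero]

end PhiBTorsion

theorem statement2_general
    {V : Type*} [AddCommGroup V] [Module ℝ V]
    (φ : V →ₗ[ℝ] V) (ξ : V) (η : V →ₗ[ℝ] ℝ)
    (hφξ : φ ξ = 0)
    (hφ2 : ∀ x : V, φ (φ x) = -x + η x • ξ)
    (hηφ : ∀ x : V, η (φ x) = 0)
    (hηξ : η ξ = 1)
    (F : V →ₗ[ℝ] V →ₗ[ℝ] V →ₗ[ℝ] ℝ)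
    (hU1 : ∀ y z : V, F ξ y z = 0)
    (hU1cond : ∀ x y : V, F x (φ y) ξ = F y (φ x) ξ)
    (T : V → V → V → ℝ)
    (hT : ∀ x y z : V, T x y z =
      η x * F y (φ z) ξ - η y * F x (φ z) ξ
        + η z * (F x (φ y) ξ - F y (φ x) ξ)) :
    (∀ x y z : V, T x y z =
      η x * T ξ (φ (φ y)) (φ (φ z)) - η y * T ξ (φ (φ x)) (φ (φ z))) ∧
    (∀ y z : V, T ξ y z = T ξ z y) := by
  obtain rfl : T = phiBTorsion φ ξ η F := funext fun x => funext fun y => funext (hT x y)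
  refine ⟨fun x y z => ?_, fun y z => ?_⟩
  · rw [phiBTorsion_of_symm hU1cond, phiBTorsion_xi_phi_sq hφξ hφ2 hηφ hηξ hU1,
      phiBTorsion_xi_phi_sq hφξ hφ2 hηφ hηξ hU1]
  · rw [phiBTorsion_xi_left hφξ hηξ hU1, phiBTorsion_xi_left hφξ hηξ hU1, hU1cond]

/-- On a manifold of the class 𝒰₁ the torsion `T` of the
φB-connection belongs to the class 𝒯₃₁ ⊕ 𝒯₃₃. -/
theorem statement2
    {V : Type*} [AddCommGroup V] [Module ℝ V]
    (φ : V →ₗ[ℝ] V) (ξ : V) (η : V →ₗ[ℝ] ℝ) (g : V →ₗ[ℝ] V →ₗ[ℝ] ℝ)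
    (hsym : ∀ x y : V, g x y = g y x)
    (hnd : ∀ x : V, (∀ y : V, g x y = 0) → x = 0)
    (hφξ : φ ξ = 0)
    (hφ2 : ∀ x : V, φ (φ x) = -x + η x • ξ)
    (hηφ : ∀ x : V, η (φ x) = 0)
    (hηξ : η ξ = 1)
    (hgφ : ∀ x y : V, g (φ x) (φ y) = -(g x y) + η x * η y)
    (F : V →ₗ[ℝ] V →ₗ[ℝ] V →ₗ[ℝ] ℝ)
    (hU1 : ∀ y z : V, F ξ y z = 0)
    (hU2 : ∀ x y z : V, F x y z = η y * F x z ξ + η z * F x y ξ)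
    (hU1cond : ∀ x y : V, F x (φ y) ξ = F y (φ x) ξ)
    (T : V → V → V → ℝ)
    (hT : ∀ x y z : V, T x y z =
      η x * F y (φ z) ξ - η y * F x (φ z) ξ
        + η z * (F x (φ y) ξ - F y (φ x) ξ)) :
    (∀ x y z : V, T x y z =
      η x * T ξ (φ (φ y)) (φ (φ z)) - η y * T ξ (φ (φ x)) (φ (φ z))) ∧
    (∀ y z : V, T ξ y z = T ξ z y) :=
  statement2_general φ ξ η hφξ hφ2 hηφ hηξ F hU1 hU1cond T hT
end

section
/- Let λ₁, λ₂, λ₃, λ₄, μ₁, μ₃ ∈ ℝ, let V = ℝ⁵ carry the structure (φ, ξ, η, g) and bracket [·,·] of the 5-dimensional Lie group example, let ∇ be the Koszul bilinear map and ∇' the φB-connection. Then the curvature of ∇' vanishes identically: R'(x,y)z := ∇'ₓ(∇'_y z) − ∇'_y(∇'ₓ z) − ∇'_{[x,y]} z = 0 for all x, y, z ∈ V. (The manifold (G, φ, ξ, η, g) has a flat φB-connection.) -/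
noncomputable section

/-- `V = ℝ⁵`. -/
abbrev V5 : Type := Fin 5 → ℝ

/-- The standard basis `e₁,…,e₅` of `ℝ⁵` (0-indexed: `E 0 = e₁`, …, `E 4 = e₅`). -/
def E (i : Fin 5) : V5 := Pi.single i 1

/-- The B-metric `g` of the example. -/
def gB (x y : V5) : ℝ :=
  x 0 * y 0 + x 1 * y 1 - x 2 * y 2 - x 3 * y 3 + x 4 * y 4

/-- The endomorphism `φ`. -/
def phiV (x : V5) : V5 := ![-(x 2), -(x 3), x 0, x 1, 0]

/-- The 1-form `η`. -/
def etaV (x : V5) : ℝ := x 4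

/-- The Reeb vector field `ξ = e₅`. -/
def xiV : V5 := E 4

/-! The bracket vanishes on `span(e₁,…,e₄)` and `[eᵢ, ξ] = B eᵢ` there, so by bilinearity
`[x, y] = η(y) B x - η(x) B y`; in particular every bracket has no `ξ`-component. Feeding this
into the Koszul formula and using that `g` is nondegenerate and `φ` is `g`-symmetric, one finds
`∇'ₓ y = η(x) A y` for a fixed endomorphism `A`, a pair of simultaneous rotations of the
`(e₁,e₂)`- and `(e₃,e₄)`-planes. Then `∇'ₓ ∇'_y z = η(x) η(y) A² z` is symmetric in `x, y`
and `∇'_[x,y] = η([x,y]) A = 0`, so `R' = 0`. -/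

open Matrix

theorem bracket_eq_smul_sub_smul {ι R : Type*} [Fintype ι] [DecidableEq ι] [CommRing R]
    (br : (ι → R) →ₗ[R] (ι → R) →ₗ[R] (ι → R)) (halt : br.IsAlt) (B : (ι → R) →ₗ[R] (ι → R))
    (t : ι) (hzero : ∀ i j, i ≠ t → j ≠ t → br (Pi.single i 1) (Pi.single j 1) = 0)
    (hB : ∀ i, i ≠ t → br (Pi.single i 1) (Pi.single t 1) = B (Pi.single i 1))
    (x y : ι → R) : br x y = y t • B x - x t • B y := by
  let rhs : (ι → R) →ₗ[R] (ι → R) →ₗ[R] (ι → R) :=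
    LinearMap.mk₂ R (fun x y => y t • B x - x t • B y)
      (by intros; simp only [map_add, Pi.add_apply]; module)
      (by intros; simp only [map_smul, Pi.smul_apply, smul_eq_mul]; module)
      (by intros; simp only [map_add, Pi.add_apply]; module)
      (by intros; simp only [map_smul, Pi.smul_apply, smul_eq_mul]; module)
  have hbr : br = rhs := LinearMap.ext_basis (Pi.basisFun R ι) (Pi.basisFun R ι) fun i j => by
    simp only [Pi.basisFun_apply]
    by_cases hi : i = t <;> by_cases hj : j = t <;> subst_vars
    · simp [rhs, halt.self_eq_zero]
    · rw [← halt.neg, hB j hj]; simp [rhs, hj]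
    · simp [rhs, hB i hi, hi]
    · simp [rhs, hzero i j hi hj, hi, hj]
  exact congr($hbr x y)

theorem curvature_eq_zero_of_eq_smul {R V : Type*} [CommRing R] [AddCommGroup V] [Module R V]
    (η : V → R) (A : V →ₗ[R] V) (br D' : V → V → V) (hD' : ∀ x y, D' x y = η x • A y)
    (hη : ∀ x y, η (br x y) = 0) (x y z : V) :
    D' x (D' y z) - D' y (D' x z) - D' (br x y) z = 0 := by
  simp only [hD', hη, map_smul, smul_smul, mul_comm (η x), zero_smul, sub_self]

/-- Column `i` is the bracket `[eᵢ₊₁, e₅]`. -/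
def bracketMatrix (l1 l2 l3 l4 m1 m3 : ℝ) : Matrix (Fin 5) (Fin 5) ℝ :=
  !![l1, m1, -l3, -m3, 0;
     l2, -l1, -l4, l3, 0;
     l3, m3, l1, m1, 0;
     l4, -l3, l2, -l1, 0;
     0, 0, 0, 0, 0]

def connectionMatrix (a b : ℝ) : Matrix (Fin 5) (Fin 5) ℝ :=
  !![0, -a, 0, b, 0;
     a, 0, -b, 0, 0;
     0, -b, 0, -a, 0;
     b, 0, a, 0, 0;
     0, 0, 0, 0, 0]

theorem bracketMatrix_mulVec (l1 l2 l3 l4 m1 m3 : ℝ) (v : V5) :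
    bracketMatrix l1 l2 l3 l4 m1 m3 *ᵥ v =
      ![l1 * v 0 + m1 * v 1 - l3 * v 2 - m3 * v 3, l2 * v 0 - l1 * v 1 - l4 * v 2 + l3 * v 3,
        l3 * v 0 + m3 * v 1 + l1 * v 2 + m1 * v 3, l4 * v 0 - l3 * v 1 + l2 * v 2 - l1 * v 3, 0] := by
  ext i; fin_cases i <;> simp [bracketMatrix, Matrix.mulVec, dotProduct, Fin.sum_univ_five] <;> ring

theorem connectionMatrix_mulVec (a b : ℝ) (v : V5) :
    connectionMatrix a b *ᵥ v =
      ![-a * v 1 + b * v 3, a * v 0 - b * v 2, -b * v 1 - a * v 3, b * v 0 + a * v 2, 0] := by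
  ext i; fin_cases i <;> simp [connectionMatrix, Matrix.mulVec, dotProduct, Fin.sum_univ_five] <;> ring

theorem gB_add_left (u v w : V5) : gB (u + v) w = gB u w + gB v w := by
  simp only [gB, Pi.add_apply]; ring

theorem gB_sub_left (u v w : V5) : gB (u - v) w = gB u w - gB v w := by
  simp only [gB, Pi.sub_apply]; ring

theorem gB_smul_left (c : ℝ) (u w : V5) : gB (c • u) w = c * gB u w := by
  simp only [gB, Pi.smul_apply, smul_eq_mul]; ring

theorem gB_phiV_left (u w : V5) : gB (phiV u) w = gB u (phiV w) := by
  simp [gB, phiV]; ring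

theorem gB_xiV_left (w : V5) : gB xiV w = w 4 := by
  simp [gB, xiV, E]

theorem eq_of_forall_gB_eq {u v : V5} (h : ∀ w, gB u w = gB v w) : u = v := by
  ext i
  fin_cases i
  · simpa [gB, E] using h (E 0)
  · simpa [gB, E] using h (E 1)
  · simpa [gB, E] using h (E 2)
  · simpa [gB, E] using h (E 3)
  · simpa [gB, E] using h (E 4)

theorem bracket_eq_bracketMatrix (l1 l2 l3 l4 m1 m3 : ℝ) (br : V5 →ₗ[ℝ] V5 →ₗ[ℝ] V5)
    (hanti : ∀ x y : V5, br x y = -br y x)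
    (hij : ∀ i j : Fin 5, i ≠ 4 → j ≠ 4 → br (E i) (E j) = 0)
    (h15 : br (E 0) (E 4) = l1 • E 0 + l2 • E 1 + l3 • E 2 + l4 • E 3)
    (h25 : br (E 1) (E 4) = m1 • E 0 + (-l1) • E 1 + m3 • E 2 + (-l3) • E 3)
    (h35 : br (E 2) (E 4) = (-l3) • E 0 + (-l4) • E 1 + l1 • E 2 + l2 • E 3)
    (h45 : br (E 3) (E 4) = (-m3) • E 0 + l3 • E 1 + m1 • E 2 + (-l1) • E 3) (x y : V5) :
    br x y = y 4 • toLin' (bracketMatrix l1 l2 l3 l4 m1 m3) x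
      - x 4 • toLin' (bracketMatrix l1 l2 l3 l4 m1 m3) y := by
  refine bracket_eq_smul_sub_smul br (fun v => self_eq_neg.mp (hanti v v)) _ 4 hij
    (fun i hi => ?_) x y
  fin_cases i
  · refine h15.trans ?_; ext k; fin_cases k <;> simp [E, bracketMatrix]
  · refine h25.trans ?_; ext k; fin_cases k <;> simp [E, bracketMatrix]
  · refine h35.trans ?_; ext k; fin_cases k <;> simp [E, bracketMatrix]
  · refine h45.trans ?_; ext k; fin_cases k <;> simp [E, bracketMatrix]
  · exact absurd rfl hi

theorem etaV_bracket_eq_zero (l1 l2 l3 l4 m1 m3 : ℝ) (br : V5 → V5 → V5)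
    (hbr : ∀ x y, br x y = y 4 • toLin' (bracketMatrix l1 l2 l3 l4 m1 m3) x
      - x 4 • toLin' (bracketMatrix l1 l2 l3 l4 m1 m3) y) (x y : V5) :
    etaV (br x y) = 0 := by
  simp [hbr, etaV, bracketMatrix_mulVec]

theorem phiBConnection_eq_etaV_smul (l1 l2 l3 l4 m1 m3 : ℝ) (br : V5 → V5 → V5)
    (hbr : ∀ x y, br x y = y 4 • toLin' (bracketMatrix l1 l2 l3 l4 m1 m3) x
      - x 4 • toLin' (bracketMatrix l1 l2 l3 l4 m1 m3) y)
    (D : V5 → V5 → V5)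
    (hKoszul : ∀ x y z : V5,
      2 * gB (D x y) z = gB (br x y) z - gB (br y z) x + gB (br z x) y)
    (D' : V5 → V5 → V5)
    (hD' : ∀ x y : V5, D' x y =
      D x y
        + (1 / 2 : ℝ) • ((D x (phiV (phiV y)) - phiV (D x (phiV y)))
            + gB (D x xiV) y • xiV)
        - etaV y • D x xiV) (x y : V5) :
    D' x y = etaV x • toLin' (connectionMatrix ((m1 - l2) / 2) ((m3 - l4) / 2)) y := by
  have hD : ∀ a b c, gB (D a b) c = (gB (br a b) c - gB (br b c) a + gB (br c a) b) / 2 :=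
    fun a b c => by linarith [hKoszul a b c]
  refine eq_of_forall_gB_eq fun z => ?_
  simp only [hD', gB_add_left, gB_sub_left, gB_smul_left, gB_phiV_left, gB_xiV_left, hD, hbr]
  simp only [Matrix.toLin'_apply, bracketMatrix_mulVec, connectionMatrix_mulVec]
  simp [gB, etaV, phiV, xiV, E]
  ring

/-- The φB-connection of the 5-dimensional Lie group example
is flat: its curvature tensor vanishes identically. -/
theorem statement13 (l1 l2 l3 l4 m1 m3 : ℝ)
    (br : V5 →ₗ[ℝ] V5 →ₗ[ℝ] V5)
    (hanti : ∀ x y : V5, br x y = -br y x)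
    (hij : ∀ i j : Fin 5, i ≠ 4 → j ≠ 4 → br (E i) (E j) = 0)
    (h15 : br (E 0) (E 4) = l1 • E 0 + l2 • E 1 + l3 • E 2 + l4 • E 3)
    (h25 : br (E 1) (E 4) = m1 • E 0 + (-l1) • E 1 + m3 • E 2 + (-l3) • E 3)
    (h35 : br (E 2) (E 4) = (-l3) • E 0 + (-l4) • E 1 + l1 • E 2 + l2 • E 3)
    (h45 : br (E 3) (E 4) = (-m3) • E 0 + l3 • E 1 + m1 • E 2 + (-l1) • E 3)
    (D : V5 →ₗ[ℝ] V5 →ₗ[ℝ] V5)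
    (hKoszul : ∀ x y z : V5,
      2 * gB (D x y) z = gB (br x y) z - gB (br y z) x + gB (br z x) y)
    (D' : V5 → V5 → V5)
    (hD' : ∀ x y : V5, D' x y =
      D x y
        + (1 / 2 : ℝ) • ((D x (phiV (phiV y)) - phiV (D x (phiV y)))
            + gB (D x xiV) y • xiV)
        - etaV y • D x xiV) :
    ∀ x y z : V5, D' x (D' y z) - D' y (D' x z) - D' (br x y) z = 0 := by
  have hbr := bracket_eq_bracketMatrix l1 l2 l3 l4 m1 m3 br hanti hij h15 h25 h35 h45
  exact curvature_eq_zero_of_eq_smul etaV _ (fun x y => br x y) D'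
    (phiBConnection_eq_etaV_smul l1 l2 l3 l4 m1 m3 _ hbr (fun x y => D x y) hKoszul D' hD')
    (etaV_bracket_eq_zero l1 l2 l3 l4 m1 m3 _ hbr)
end
end
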